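/- If X and Y are real-valued S1-processes on I and μ = ±1, then for all t ∈ I: (i) d/dt E[X(t) Y(t)] = E[ Re(𝒟_μ X(t)) · Y(t) + X(t) · Re(𝒟_μ Y(t)) ], and (ii) E[ Im(𝒟_μ X(t)) · Y(t) ] = E[ X(t) · Im(𝒟_μ Y(t)) ]. -/

import Mathlib

/-!
Write `F(s) = E[X(s) Y(s)]` as the diagonal `s ↦ Φ(s, s)` of `Φ(s, r) = E[X(s) Y(r)]`.
For `s ≤ r` the variable `Y(r)` is `ℱ_s`-measurable and `X(s)` is `𝒫_r`-measurable, so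
conditioning the difference quotients on `ℱ_s`, resp. `𝒫_r`, shows that `Φ(·, r)` has left
derivative `E[D*X(s) Y(r)]` at `s` and `Φ(s, ·)` has right derivative `E[X(s) DY(r)]` at `r`.
Both are jointly continuous in `(s, r)`, so a one-sided mean value argument on `Φ(q,q) - Φ(p,p) =
(Φ(q,q) - Φ(p,q)) + (Φ(p,q) - Φ(p,p))` gives `F'(t) = E[D*X(t) Y(t)] + E[X(t) DY(t)]`.
Exchanging `X` and `Y` gives also `F'(t) = E[DX(t) Y(t)] + E[X(t) D*Y(t)]`; the average of the
two formulas is (i) and their difference is (ii).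
-/

open MeasureTheory Filter Set

/-- An S1-process on the open interval `I = (a,b)` with values in a Banach
space `E`: a stochastic process with continuous sample paths on `Ī = [a,b]`,
adapted to the increasing filtration `Pfil` and to the decreasing filtration `Ffil`,
square integrable and `L²`-continuous in `t`, whose forward Nelson derivative
`D X(t) = lim_{h→0⁺} h⁻¹ E[X(t+h) - X(t) | Pfil_t]` and backward Nelson
derivative `D* X(t) = lim_{h→0⁺} h⁻¹ E[X(t) - X(t-h) | Ffil_t]` exist in `L²(Ω)`
for every `t ∈ I` and are `L²`-continuous in `t`.  The fields `D` and `Dstar`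
record the Nelson derivatives. -/
structure S1Process {Ω : Type*} [m0 : MeasurableSpace Ω] (P : Measure Ω)
    (Pfil Ffil : ℝ → MeasurableSpace Ω) (a b : ℝ)
    (E : Type*) [NormedAddCommGroup E] [NormedSpace ℝ E] [CompleteSpace E] where
  toFun : ℝ → Ω → E
  D : ℝ → Ω → E
  Dstar : ℝ → Ω → E
  cont_paths : ∀ ω : Ω, ContinuousOn (fun t => toFun t ω) (Set.Icc a b)
  adapted_P : ∀ t ∈ Set.Icc a b, StronglyMeasurable[Pfil t] (toFun t)
  adapted_F : ∀ t ∈ Set.Icc a b, StronglyMeasurable[Ffil t] (toFun t)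
  memL2 : ∀ t ∈ Set.Icc a b, MemLp (toFun t) 2 P
  contL2 : ∀ t ∈ Set.Icc a b,
    Tendsto (fun s => eLpNorm (toFun s - toFun t) 2 P)
      (nhdsWithin t (Set.Icc a b)) (nhds 0)
  memL2_D : ∀ t ∈ Set.Ioo a b, MemLp (D t) 2 P
  memL2_Dstar : ∀ t ∈ Set.Ioo a b, MemLp (Dstar t) 2 P
  hasD : ∀ t ∈ Set.Ioo a b,
    Tendsto (fun h : ℝ =>
        eLpNorm (fun ω => h⁻¹ • (P[toFun (t + h) - toFun t | Pfil t]) ω - D t ω) 2 P)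
      (nhdsWithin 0 (Set.Ioi 0)) (nhds 0)
  hasDstar : ∀ t ∈ Set.Ioo a b,
    Tendsto (fun h : ℝ =>
        eLpNorm (fun ω => h⁻¹ • (P[toFun t - toFun (t - h) | Ffil t]) ω - Dstar t ω) 2 P)
      (nhdsWithin 0 (Set.Ioi 0)) (nhds 0)
  contL2_D : ∀ t ∈ Set.Ioo a b,
    Tendsto (fun s => eLpNorm (D s - D t) 2 P) (nhdsWithin t (Set.Ioo a b)) (nhds 0)
  contL2_Dstar : ∀ t ∈ Set.Ioo a b,
    Tendsto (fun s => eLpNorm (Dstar s - Dstar t) 2 P) (nhdsWithin t (Set.Ioo a b)) (nhds 0)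

/-- The complex Nelson derivative `𝒟_μ = (D + D*)/2 + iμ(D - D*)/2` of a
real-valued S1-process, for `μ = ±1`. -/
noncomputable def S1Process.Dc {Ω : Type*} [m0 : MeasurableSpace Ω] {P : Measure Ω}
    {Pfil Ffil : ℝ → MeasurableSpace Ω} {a b : ℝ}
    (X : S1Process P Pfil Ffil a b ℝ) (μ : ℝ) : ℝ → Ω → ℂ :=
  fun t ω => ((X.D t ω + X.Dstar t ω : ℝ) : ℂ) / 2
    + Complex.I * (μ : ℂ) * (((X.D t ω - X.Dstar t ω : ℝ) : ℂ) / 2)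

open Topology

theorem abs_sub_sub_mul_le_of_hasDerivWithinAt_Ici {f g : ℝ → ℝ} {s v c C : ℝ} (hsv : s ≤ v)
    (hf : ContinuousOn f (Icc s v)) (hd : ∀ r ∈ Ico s v, HasDerivWithinAt f (g r) (Ici r) r)
    (hb : ∀ r ∈ Ico s v, |g r - c| ≤ C) :
    |f v - f s - (v - s) * c| ≤ C * (v - s) := by
  have hfc : ContinuousOn (fun x => f x - x * c) (Icc s v) :=
    hf.sub (continuousOn_id.mul continuousOn_const)
  have hdc : ∀ r ∈ Ico s v, HasDerivWithinAt (fun x => f x - x * c) (g r - c) (Ici r) r :=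
    fun r hr => (hd r hr).sub (hasDerivAt_mul_const c).hasDerivWithinAt
  have h := norm_image_sub_le_of_norm_deriv_right_le_segment hfc hdc hb v (right_mem_Icc.2 hsv)
  rw [Real.norm_eq_abs] at h
  convert h using 2
  ring

theorem abs_sub_sub_mul_le_of_hasDerivWithinAt_Iic {f g : ℝ → ℝ} {s v c C : ℝ} (hsv : s ≤ v)
    (hf : ContinuousOn f (Icc s v)) (hd : ∀ r ∈ Ioc s v, HasDerivWithinAt f (g r) (Iic r) r)
    (hb : ∀ r ∈ Ioc s v, |g r - c| ≤ C) :
    |f v - f s - (v - s) * c| ≤ C * (v - s) := by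
  have hneg : ∀ r ∈ Ico (-v) (-s), -r ∈ Ioc s v := fun r hr =>
    ⟨by linarith [hr.2], by linarith [hr.1]⟩
  have hrefl := abs_sub_sub_mul_le_of_hasDerivWithinAt_Ici (f := fun x => f (-x))
    (g := fun x => -g (-x)) (c := -c) (C := C) (neg_le_neg hsv)
    (hf.comp continuousOn_neg fun x hx => ⟨by linarith [hx.2], by linarith [hx.1]⟩)
    (fun r hr => by
      have hmaps : MapsTo Neg.neg (Ici r) (Iic (-r)) := fun x hx => neg_le_neg (mem_Ici.1 hx)
      simpa [Function.comp_def] using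
        (hd (-r) (hneg r hr)).comp r (hasDerivAt_neg r).hasDerivWithinAt hmaps)
    (fun r hr => by
      rw [show -g (-r) - -c = -(g (-r) - c) by ring, abs_neg]
      exact hb (-r) (hneg r hr))
  simp only [neg_neg] at hrefl
  rw [← abs_neg]
  convert hrefl using 2 <;> ring

theorem hasDerivAt_diag_of_hasDerivWithinAt_Iic_Ici {Φ g₁ g₂ : ℝ → ℝ → ℝ} {U : Set ℝ} {t : ℝ}
    (hU : U ∈ 𝓝 t) (hΦ : ContinuousOn (Function.uncurry Φ) (U ×ˢ U))
    (h₁ : ∀ s ∈ U, ∀ r ∈ U, s ≤ r → HasDerivWithinAt (Φ · r) (g₁ s r) (Iic s) s)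
    (h₂ : ∀ s ∈ U, ∀ r ∈ U, s ≤ r → HasDerivWithinAt (Φ s ·) (g₂ s r) (Ici r) r)
    (hg₁ : ContinuousAt (Function.uncurry g₁) (t, t))
    (hg₂ : ContinuousAt (Function.uncurry g₂) (t, t)) :
    HasDerivAt (fun s => Φ s s) (g₁ t t + g₂ t t) t := by
  rw [hasDerivAt_iff_isLittleO, Asymptotics.isLittleO_iff]
  intro ε hε
  have hnear : ∀ᶠ p : ℝ × ℝ in 𝓝 (t, t), p.1 ∈ U ∧ p.2 ∈ U ∧
      |g₁ p.1 p.2 - g₁ t t| ≤ ε / 2 ∧ |g₂ p.1 p.2 - g₂ t t| ≤ ε / 2 := by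
    have hclose : ∀ g : ℝ → ℝ → ℝ, ContinuousAt (Function.uncurry g) (t, t) →
        ∀ᶠ p : ℝ × ℝ in 𝓝 (t, t), |g p.1 p.2 - g t t| ≤ ε / 2 := fun g hg =>
      (hg.eventually (Metric.closedBall_mem_nhds _ (half_pos hε))).mono fun p hp => hp
    exact (continuousAt_fst.eventually_mem hU).and ((continuousAt_snd.eventually_mem hU).and
      ((hclose g₁ hg₁).and (hclose g₂ hg₂)))
  obtain ⟨δ, hδ, hball⟩ := Metric.eventually_nhds_iff_ball.1 hnear
  have hbox : ∀ s ∈ Metric.ball t δ, ∀ r ∈ Metric.ball t δ, s ∈ U ∧ r ∈ U ∧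
      |g₁ s r - g₁ t t| ≤ ε / 2 ∧ |g₂ s r - g₂ t t| ≤ ε / 2 := fun s hs r hr =>
    hball (s, r) (by rw [← ball_prod_same]; exact ⟨hs, hr⟩)
  have hsegment : ∀ p ∈ Metric.ball t δ, ∀ q ∈ Metric.ball t δ, p ≤ q →
      |Φ q q - Φ p p - (q - p) * (g₁ t t + g₂ t t)| ≤ ε * (q - p) := by
    intro p hp q hq hpq
    have hsub : Icc p q ⊆ Metric.ball t δ := by
      rw [Real.ball_eq_Ioo] at hp hq ⊢
      exact Icc_subset_Ioo hp.1 hq.2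
    have hA := abs_sub_sub_mul_le_of_hasDerivWithinAt_Iic (f := (Φ · q)) (g := (g₁ · q)) hpq
      (hΦ.comp (continuousOn_id.prodMk continuousOn_const)
        fun s hs => ⟨(hbox s (hsub hs) q hq).1, (hbox s (hsub hs) q hq).2.1⟩)
      (fun s hs => h₁ s (hbox s (hsub (Ioc_subset_Icc_self hs)) q hq).1 q
        (hbox p hp q hq).2.1 hs.2)
      (fun s hs => (hbox s (hsub (Ioc_subset_Icc_self hs)) q hq).2.2.1)
    have hB := abs_sub_sub_mul_le_of_hasDerivWithinAt_Ici (f := (Φ p ·)) (g := (g₂ p ·)) hpq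
      (hΦ.comp (continuousOn_const.prodMk continuousOn_id)
        fun r hr => ⟨(hbox p hp r (hsub hr)).1, (hbox p hp r (hsub hr)).2.1⟩)
      (fun r hr => h₂ p (hbox p hp q hq).1 r
        (hbox p hp r (hsub (Ico_subset_Icc_self hr))).2.1 hr.1)
      (fun r hr => (hbox p hp r (hsub (Ico_subset_Icc_self hr))).2.2.2)
    calc |Φ q q - Φ p p - (q - p) * (g₁ t t + g₂ t t)|
        = |(Φ q q - Φ p q - (q - p) * g₁ t t) + (Φ p q - Φ p p - (q - p) * g₂ t t)| := by
          ring_nf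
      _ ≤ ε / 2 * (q - p) + ε / 2 * (q - p) := (abs_add_le _ _).trans (add_le_add hA hB)
      _ = ε * (q - p) := by ring
  filter_upwards [Metric.ball_mem_nhds t hδ] with u hu
  rw [Real.norm_eq_abs, Real.norm_eq_abs, smul_eq_mul]
  rcases le_total t u with htu | hut
  · rw [abs_of_nonneg (sub_nonneg.2 htu)]
    exact hsegment t (Metric.mem_ball_self hδ) u hu htu
  · rw [abs_of_nonpos (sub_nonpos.2 hut), ← abs_neg]
    convert hsegment u hu t (Metric.mem_ball_self hδ) hut using 2 <;> ring

section L2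

variable {Ω α β : Type*} [m0 : MeasurableSpace Ω] [TopologicalSpace α] [TopologicalSpace β]
  {P : Measure Ω}

theorem abs_integral_mul_le_eLpNorm_mul_eLpNorm {f g : Ω → ℝ} (hf : MemLp f 2 P)
    (hg : MemLp g 2 P) :
    |∫ ω, f ω * g ω ∂P| ≤ (eLpNorm f 2 P).toReal * (eLpNorm g 2 P).toReal := by
  have hinner : ∫ ω, f ω * g ω ∂P = inner ℝ (hf.toLp f) (hg.toLp g) := by
    rw [L2.inner_def]
    refine integral_congr_ae ?_
    filter_upwards [hf.coeFn_toLp, hg.coeFn_toLp] with ω hfω hgω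
    simp [hfω, hgω, mul_comm]
  rw [hinner, ← Lp.norm_toLp f hf, ← Lp.norm_toLp g hg]
  exact abs_real_inner_le_norm _ _

theorem tendsto_integral_mul_of_tendsto_eLpNorm_sub {ι : Type*} {l : Filter ι}
    {F G : ι → Ω → ℝ} {f g : Ω → ℝ} (hF : ∀ᶠ i in l, MemLp (F i) 2 P)
    (hG : ∀ᶠ i in l, MemLp (G i) 2 P) (hf : MemLp f 2 P) (hg : MemLp g 2 P)
    (hFf : Tendsto (fun i => eLpNorm (F i - f) 2 P) l (𝓝 0))
    (hGg : Tendsto (fun i => eLpNorm (G i - g) 2 P) l (𝓝 0)) :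
    Tendsto (fun i => ∫ ω, F i ω * G i ω ∂P) l (𝓝 (∫ ω, f ω * g ω ∂P)) := by
  have toReal_tendsto : ∀ {u : ι → ENNReal}, Tendsto u l (𝓝 0) →
      Tendsto (fun i => (u i).toReal) l (𝓝 0) := fun hu =>
    (ENNReal.tendsto_toReal ENNReal.zero_ne_top).comp hu
  have hlim := (((toReal_tendsto hFf).mul (toReal_tendsto hGg)).add
    ((toReal_tendsto hFf).mul_const (eLpNorm g 2 P).toReal)).add
    ((toReal_tendsto hGg).const_mul (eLpNorm f 2 P).toReal)
  simp only [zero_mul, mul_zero, add_zero] at hlim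
  rw [tendsto_iff_norm_sub_tendsto_zero]
  refine squeeze_zero' (Eventually.of_forall fun _ => norm_nonneg _) ?_ hlim
  filter_upwards [hF, hG] with i hFi hGi
  have hint : ∀ {u v : Ω → ℝ}, MemLp u 2 P → MemLp v 2 P →
      Integrable (fun ω => u ω * v ω) P := fun hu hv => hu.integrable_mul hv
  have hFf' := hFi.sub hf
  have hGg' := hGi.sub hg
  have hsplit : ∫ ω, F i ω * G i ω ∂P - ∫ ω, f ω * g ω ∂P
      = ∫ ω, (F i - f) ω * (G i - g) ω ∂P + ∫ ω, (F i - f) ω * g ω ∂P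
        + ∫ ω, f ω * (G i - g) ω ∂P := by
    have e1 := integral_add ((hint hFf' hGg').add (hint hFf' hg)) (hint hf hGg')
    have e2 := integral_add (hint hFf' hGg') (hint hFf' hg)
    have e3 := integral_sub (hint hFi hGi) (hint hf hg)
    simp only [Pi.add_apply] at e1 e2 e3
    rw [← e3, ← e2, ← e1]
    congr 1
    funext ω
    simp only [Pi.sub_apply]
    ring
  rw [Real.norm_eq_abs, hsplit]
  refine (abs_add_three _ _ _).trans (add_le_add (add_le_add ?_ ?_) ?_)
  · exact abs_integral_mul_le_eLpNorm_mul_eLpNorm hFf' hGg'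
  · exact abs_integral_mul_le_eLpNorm_mul_eLpNorm hFf' hg
  · exact abs_integral_mul_le_eLpNorm_mul_eLpNorm hf hGg'

theorem integral_mul_condExp [IsFiniteMeasure P] {m : MeasurableSpace Ω} (hm : m ≤ m0)
    {f g : Ω → ℝ} (hgm : StronglyMeasurable[m] g) (hg : MemLp g 2 P) (hf : MemLp f 2 P) :
    ∫ ω, g ω * (P[f|m]) ω ∂P = ∫ ω, g ω * f ω ∂P :=
  calc ∫ ω, g ω * (P[f|m]) ω ∂P = ∫ ω, (P[g * f|m]) ω ∂P :=
        integral_congr_ae (condExp_mul_of_stronglyMeasurable_left hgm (hg.integrable_mul hf)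
          (hf.integrable one_le_two)).symm
    _ = ∫ ω, g ω * f ω ∂P := integral_condExp hm

theorem tendsto_mul_integral_mul_of_tendsto_smul_condExp [IsFiniteMeasure P]
    {m : MeasurableSpace Ω} (hm : m ≤ m0) {ι : Type*} {l : Filter ι} {c : ι → ℝ}
    {Δ : ι → Ω → ℝ} {W L : Ω → ℝ} (hW : MemLp W 2 P) (hWm : StronglyMeasurable[m] W)
    (hΔ : ∀ᶠ i in l, MemLp (Δ i) 2 P) (hL : MemLp L 2 P)
    (h : Tendsto (fun i => eLpNorm (c i • P[Δ i|m] - L) 2 P) l (𝓝 0)) :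
    Tendsto (fun i => c i * ∫ ω, W ω * Δ i ω ∂P) l (𝓝 (∫ ω, W ω * L ω ∂P)) := by
  refine (tendsto_integral_mul_of_tendsto_eLpNorm_sub (m0 := m0) (F := fun _ => W)
    (Eventually.of_forall fun _ => hW) (hΔ.mono fun i hi => (hi.condExp one_le_two).const_smul _)
    hW hL (by simp [tendsto_const_nhds]) h).congr' ?_
  filter_upwards [hΔ] with i hi
  rw [← integral_mul_condExp (m0 := m0) hm hWm hW hi, ← integral_const_mul]
  congr 1
  funext ω
  simp only [Pi.smul_apply, smul_eq_mul]
  ring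

def L2ContinuousAt (P : Measure Ω) (F : α → Ω → ℝ) (x : α) : Prop :=
  (∀ᶠ y in 𝓝 x, MemLp (F y) 2 P) ∧ Tendsto (fun y => eLpNorm (F y - F x) 2 P) (𝓝 x) (𝓝 0)

theorem L2ContinuousAt.continuousAt_integral_mul {F : α → Ω → ℝ}
    {G : β → Ω → ℝ} {x : α} {y : β} (hF : L2ContinuousAt P F x) (hG : L2ContinuousAt P G y) :
    ContinuousAt (fun p : α × β => ∫ ω, F p.1 ω * G p.2 ω ∂P) (x, y) :=
  tendsto_integral_mul_of_tendsto_eLpNorm_sub ((continuousAt_fst (p := (x, y))).eventually hF.1)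
    ((continuousAt_snd (p := (x, y))).eventually hG.1) hF.1.self_of_nhds hG.1.self_of_nhds
    (hF.2.comp continuousAt_fst) (hG.2.comp continuousAt_snd)

end L2

namespace S1Process

variable {Ω : Type*} [m0 : MeasurableSpace Ω] {P : Measure Ω} {Pfil Ffil : ℝ → MeasurableSpace Ω}
  {a b t : ℝ}

theorem l2ContinuousAt_toFun (X : S1Process P Pfil Ffil a b ℝ) (ht : t ∈ Ioo a b) :
    L2ContinuousAt P X.toFun t := by
  have hI : Icc a b ∈ 𝓝 t := Icc_mem_nhds ht.1 ht.2
  refine ⟨eventually_of_mem hI X.memL2, ?_⟩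
  simpa only [nhdsWithin_eq_nhds.2 hI] using X.contL2 t (Ioo_subset_Icc_self ht)

theorem l2ContinuousAt_D (X : S1Process P Pfil Ffil a b ℝ) (ht : t ∈ Ioo a b) :
    L2ContinuousAt P X.D t := by
  have hI : Ioo a b ∈ 𝓝 t := Ioo_mem_nhds ht.1 ht.2
  refine ⟨eventually_of_mem hI X.memL2_D, ?_⟩
  simpa only [nhdsWithin_eq_nhds.2 hI] using X.contL2_D t ht

theorem l2ContinuousAt_Dstar (X : S1Process P Pfil Ffil a b ℝ) (ht : t ∈ Ioo a b) :
    L2ContinuousAt P X.Dstar t := by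
  have hI : Ioo a b ∈ 𝓝 t := Ioo_mem_nhds ht.1 ht.2
  refine ⟨eventually_of_mem hI X.memL2_Dstar, ?_⟩
  simpa only [nhdsWithin_eq_nhds.2 hI] using X.contL2_Dstar t ht

theorem integral_mul_sub_integral_mul (X : S1Process P Pfil Ffil a b ℝ) {W : Ω → ℝ}
    (hW : MemLp W 2 P) {s r : ℝ} (hs : s ∈ Icc a b) (hr : r ∈ Icc a b) :
    ∫ ω, W ω * X.toFun s ω ∂P - ∫ ω, W ω * X.toFun r ω ∂P
      = ∫ ω, W ω * (X.toFun s - X.toFun r) ω ∂P := by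
  have hsub := integral_sub (hW.integrable_mul (X.memL2 s hs)) (hW.integrable_mul (X.memL2 r hr))
  simp only [Pi.mul_apply] at hsub
  simp only [hsub, Pi.sub_apply, mul_sub]

theorem re_Dc (X : S1Process P Pfil Ffil a b ℝ) (μ t : ℝ) (ω : Ω) :
    (X.Dc μ t ω).re = (X.D t ω + X.Dstar t ω) / 2 := by
  simp [Dc]

theorem im_Dc (X : S1Process P Pfil Ffil a b ℝ) (μ t : ℝ) (ω : Ω) :
    (X.Dc μ t ω).im = μ * ((X.D t ω - X.Dstar t ω) / 2) := by
  simp [Dc]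

theorem memLp_re_Dc (X : S1Process P Pfil Ffil a b ℝ) (μ : ℝ) (ht : t ∈ Ioo a b) :
    MemLp (fun ω => (X.Dc μ t ω).re) 2 P := by
  simpa only [re_Dc, div_eq_mul_inv, Pi.add_apply] using
    ((X.memL2_D t ht).add (X.memL2_Dstar t ht)).mul_const 2⁻¹

theorem integral_re_Dc_mul (X : S1Process P Pfil Ffil a b ℝ) (μ : ℝ) (ht : t ∈ Ioo a b)
    {W : Ω → ℝ} (hW : MemLp W 2 P) :
    ∫ ω, (X.Dc μ t ω).re * W ω ∂P = (∫ ω, X.D t ω * W ω ∂P + ∫ ω, X.Dstar t ω * W ω ∂P) / 2 := by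
  have hD : Integrable (fun ω => X.D t ω * W ω) P := (X.memL2_D t ht).integrable_mul hW
  have hDstar : Integrable (fun ω => X.Dstar t ω * W ω) P :=
    (X.memL2_Dstar t ht).integrable_mul hW
  rw [← integral_add hD hDstar, ← integral_div]
  simp only [re_Dc]
  congr 1
  funext ω
  ring

theorem integral_im_Dc_mul (X : S1Process P Pfil Ffil a b ℝ) (μ : ℝ) (ht : t ∈ Ioo a b)
    {W : Ω → ℝ} (hW : MemLp W 2 P) :
    ∫ ω, (X.Dc μ t ω).im * W ω ∂P
      = μ * (∫ ω, X.D t ω * W ω ∂P - ∫ ω, X.Dstar t ω * W ω ∂P) / 2 := by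
  have hD : Integrable (fun ω => X.D t ω * W ω) P := (X.memL2_D t ht).integrable_mul hW
  have hDstar : Integrable (fun ω => X.Dstar t ω * W ω) P :=
    (X.memL2_Dstar t ht).integrable_mul hW
  rw [← integral_sub hD hDstar, ← integral_const_mul, ← integral_div]
  simp only [im_Dc]
  congr 1
  funext ω
  ring

section FiniteMeasure

variable [IsFiniteMeasure P]

theorem hasDerivWithinAt_integral_mul_Ici (hP_le : ∀ t, Pfil t ≤ m0)
    (X : S1Process P Pfil Ffil a b ℝ) {W : Ω → ℝ} (hW : MemLp W 2 P) (ht : t ∈ Ioo a b)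
    (hWm : StronglyMeasurable[Pfil t] W) :
    HasDerivWithinAt (fun s => ∫ ω, W ω * X.toFun s ω ∂P) (∫ ω, W ω * X.D t ω ∂P) (Ici t) t := by
  have hmap : map (t + ·) (𝓝[>] 0) = 𝓝[>] t := by simp
  rw [hasDerivWithinAt_iff_tendsto_slope, Ici_sdiff_left, ← hmap, tendsto_map'_iff]
  have hnear : ∀ᶠ h in 𝓝[>] 0, t + h ∈ Icc a b :=
    eventually_of_mem (Ioo_mem_nhdsGT (sub_pos.2 ht.2)) fun h hh =>
      ⟨by linarith [ht.1, hh.1], by linarith [hh.2]⟩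
  have htI : t ∈ Icc a b := Ioo_subset_Icc_self ht
  refine (tendsto_mul_integral_mul_of_tendsto_smul_condExp (hP_le t) hW hWm
    (hnear.mono fun h hh => (X.memL2 _ hh).sub (X.memL2 t htI)) (X.memL2_D t ht)
    (X.hasD t ht)).congr' ?_
  filter_upwards [hnear] with h hh
  rw [Function.comp_apply, slope_def_field, add_sub_cancel_left,
    X.integral_mul_sub_integral_mul hW hh htI, div_eq_inv_mul]

theorem hasDerivWithinAt_integral_mul_Iic (hF_le : ∀ t, Ffil t ≤ m0)
    (X : S1Process P Pfil Ffil a b ℝ) {W : Ω → ℝ} (hW : MemLp W 2 P) (ht : t ∈ Ioo a b)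
    (hWm : StronglyMeasurable[Ffil t] W) :
    HasDerivWithinAt (fun s => ∫ ω, W ω * X.toFun s ω ∂P) (∫ ω, W ω * X.Dstar t ω ∂P)
      (Iic t) t := by
  have hmap : map (t - ·) (𝓝[>] 0) = 𝓝[<] t := by simp
  rw [hasDerivWithinAt_iff_tendsto_slope, Iic_sdiff_right, ← hmap, tendsto_map'_iff]
  have hnear : ∀ᶠ h in 𝓝[>] 0, t - h ∈ Icc a b :=
    eventually_of_mem (Ioo_mem_nhdsGT (sub_pos.2 ht.1)) fun h hh =>
      ⟨by linarith [hh.2], by linarith [ht.2, hh.1]⟩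
  have htI : t ∈ Icc a b := Ioo_subset_Icc_self ht
  refine (tendsto_mul_integral_mul_of_tendsto_smul_condExp (hF_le t) hW hWm
    (hnear.mono fun h hh => (X.memL2 t htI).sub (X.memL2 _ hh)) (X.memL2_Dstar t ht)
    (X.hasDstar t ht)).congr' ?_
  filter_upwards [hnear] with h hh
  rw [Function.comp_apply, slope_def_field, sub_sub_cancel_left, div_neg, ← neg_div, neg_sub,
    X.integral_mul_sub_integral_mul hW htI hh, div_eq_inv_mul]

theorem hasDerivAt_integral_mul (hP_mono : Monotone Pfil) (hP_le : ∀ t, Pfil t ≤ m0)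
    (hF_anti : Antitone Ffil) (hF_le : ∀ t, Ffil t ≤ m0) (X Y : S1Process P Pfil Ffil a b ℝ)
    (ht : t ∈ Ioo a b) :
    HasDerivAt (fun s => ∫ ω, X.toFun s ω * Y.toFun s ω ∂P)
      (∫ ω, X.Dstar t ω * Y.toFun t ω ∂P + ∫ ω, X.toFun t ω * Y.D t ω ∂P) t :=
  hasDerivAt_diag_of_hasDerivWithinAt_Iic_Ici (Φ := fun s r => ∫ ω, X.toFun s ω * Y.toFun r ω ∂P)
    (g₁ := fun s r => ∫ ω, X.Dstar s ω * Y.toFun r ω ∂P)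
    (g₂ := fun s r => ∫ ω, X.toFun s ω * Y.D r ω ∂P) (Ioo_mem_nhds ht.1 ht.2)
    (fun p hp => ((X.l2ContinuousAt_toFun hp.1).continuousAt_integral_mul
      (Y.l2ContinuousAt_toFun hp.2)).continuousWithinAt)
    (fun s hs r hr hsr => by
      simpa only [mul_comm] using X.hasDerivWithinAt_integral_mul_Iic hF_le
        (Y.memL2 r (Ioo_subset_Icc_self hr)) hs
        ((Y.adapted_F r (Ioo_subset_Icc_self hr)).mono (hF_anti hsr)))
    (fun s hs r hr hsr => Y.hasDerivWithinAt_integral_mul_Ici hP_le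
      (X.memL2 s (Ioo_subset_Icc_self hs)) hr
      ((X.adapted_P s (Ioo_subset_Icc_self hs)).mono (hP_mono hsr)))
    ((X.l2ContinuousAt_Dstar ht).continuousAt_integral_mul (Y.l2ContinuousAt_toFun ht))
    ((X.l2ContinuousAt_toFun ht).continuousAt_integral_mul (Y.l2ContinuousAt_D ht))

end FiniteMeasure

end S1Process

theorem nelson_complex_derivative_product_rule_general
    {Ω : Type*} [m0 : MeasurableSpace Ω] (P : Measure Ω) [IsProbabilityMeasure P]
    (Pfil Ffil : ℝ → MeasurableSpace Ω)
    (hP_mono : Monotone Pfil) (hP_le : ∀ t, Pfil t ≤ m0)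
    (hF_anti : Antitone Ffil) (hF_le : ∀ t, Ffil t ≤ m0)
    (a b : ℝ)
    (X Y : S1Process P Pfil Ffil a b ℝ)
    (μ : ℝ) :
    ∀ t ∈ Set.Ioo a b,
      HasDerivAt (fun s => ∫ ω, X.toFun s ω * Y.toFun s ω ∂P)
        (∫ ω, ((X.Dc μ t ω).re * Y.toFun t ω + X.toFun t ω * (Y.Dc μ t ω).re) ∂P) t
      ∧ (∫ ω, (X.Dc μ t ω).im * Y.toFun t ω ∂P)
          = ∫ ω, X.toFun t ω * (Y.Dc μ t ω).im ∂P := by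
  intro t ht
  have hX := X.memL2 t (Ioo_subset_Icc_self ht)
  have hY := Y.memL2 t (Ioo_subset_Icc_self ht)
  have hXY := X.hasDerivAt_integral_mul hP_mono hP_le hF_anti hF_le Y ht
  have hsym := hXY.unique <| by
    simpa only [mul_comm (Y.toFun _ _)] using
      Y.hasDerivAt_integral_mul hP_mono hP_le hF_anti hF_le X ht
  -- normal form of the integrands: `X.toFun t ω` always as the right factor
  simp only [mul_comm (X.toFun t _)] at hsym ⊢
  refine ⟨?_, ?_⟩
  · convert hXY using 1
    have hXre : Integrable (fun ω => (X.Dc μ t ω).re * Y.toFun t ω) P :=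
      (X.memLp_re_Dc μ ht).integrable_mul hY
    have hYre : Integrable (fun ω => (Y.Dc μ t ω).re * X.toFun t ω) P :=
      (Y.memLp_re_Dc μ ht).integrable_mul hX
    rw [integral_add hXre hYre, X.integral_re_Dc_mul μ ht hY, Y.integral_re_Dc_mul μ ht hX]
    simp only [mul_comm (X.toFun t _)]
    linarith
  · rw [X.integral_im_Dc_mul μ ht hY, Y.integral_im_Dc_mul μ ht hX]
    linear_combination (-μ / 2) * hsym

/-- If `X` and `Y` are real-valued S1-processes on `I = (a,b)` and `μ = ±1`,
then for all `t ∈ I`: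
(i) `d/dt E[X(t)Y(t)] = E[Re(𝒟_μX(t))·Y(t) + X(t)·Re(𝒟_μY(t))]`, and
(ii) `E[Im(𝒟_μX(t))·Y(t)] = E[X(t)·Im(𝒟_μY(t))]`. -/
theorem nelson_complex_derivative_product_rule
    {Ω : Type*} [m0 : MeasurableSpace Ω] (P : Measure Ω) [IsProbabilityMeasure P]
    (Pfil Ffil : ℝ → MeasurableSpace Ω)
    (hP_mono : Monotone Pfil) (hP_le : ∀ t, Pfil t ≤ m0)
    (hF_anti : Antitone Ffil) (hF_le : ∀ t, Ffil t ≤ m0)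
    (a b : ℝ) (hab : a < b)
    (X Y : S1Process P Pfil Ffil a b ℝ)
    (μ : ℝ) (hμ : μ = 1 ∨ μ = -1) :
    ∀ t ∈ Set.Ioo a b,
      HasDerivAt (fun s => ∫ ω, X.toFun s ω * Y.toFun s ω ∂P)
        (∫ ω, ((X.Dc μ t ω).re * Y.toFun t ω + X.toFun t ω * (Y.Dc μ t ω).re) ∂P) t
      ∧ (∫ ω, (X.Dc μ t ω).im * Y.toFun t ω ∂P)
          = ∫ ω, X.toFun t ω * (Y.Dc μ t ω).im ∂P :=
  nelson_complex_derivative_product_rule_general (m0 := m0) P Pfil Ffil hP_mono hP_le hF_anti hF_le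
    a b X Y μ
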